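/- arXiv:2011.09227 — 2 statements merged into one kernel-verified Lean document; each statement's English description precedes it below -/
import Mathlib

section
/- Let 1 ≤ k < n, let M be an indecomposable Cohen–Macaulay B_{k,n}-module, and let j ∈ {1,…,n}. Then inc_j(M) is an indecomposable Cohen–Macaulay B_{k+1,n+1}-module and inc^c_j(M) is an indecomposable Cohen–Macaulay B_{k,n+1}-module. Moreover, if M admits the filtration L_{I_1} | L_{I_2} | ⋯ | L_{I_m}, then inc_j(M) admits the filtration L_{I_1(j)} | L_{I_2(j)} | ⋯ | L_{I_m(j)}, where for a k-subset I the (k+1)-subset I(j) is defined as {i ∈ I : i ≤ j} ∪ {j+1} ∪ {i+1 : i ∈ I, i > j} ⊆ {1,…,n+1}. -/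
open scoped Classical

noncomputable section

namespace GCC

/-- The base ring `R = ℂ⟦t⟧` of formal power series. -/
abbrev Rser : Type := PowerSeries ℂ

/-- The power series variable `t`. -/
noncomputable def tser : Rser := PowerSeries.X

/-- The cyclic product `X i * X (i-1) * ⋯ * X (i-(n-1))`, i.e.
`X_{i+n} · X_{i+n-1} · ⋯ · X_{i+1}` with indices read modulo `n`. -/
def cycProd {n s : ℕ} (X : ZMod n → Matrix (Fin s) (Fin s) Rser) (i : ZMod n) :
    Matrix (Fin s) (Fin s) Rser :=
  ((List.range n).map fun j => X (i - (j : ZMod n))).prod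

/-- A (maximal) Cohen–Macaulay `B_{k,n}`-module of rank `s`: a family of `s × s`
matrices `X i`, `Y i` over `ℂ⟦t⟧`, indexed by `ℤ/n`, subject to the relations
`X i * Y i = t·Id`, `Y i * X i = t·Id`, and the cyclic relation
`X_{i+n} ⋯ X_{i+1} = t^(n-k)·Id`. -/
structure CMMod (k n s : ℕ) : Type where
  X : ZMod n → Matrix (Fin s) (Fin s) Rser
  Y : ZMod n → Matrix (Fin s) (Fin s) Rser
  hXY : ∀ i, X i * Y i = tser • (1 : Matrix (Fin s) (Fin s) Rser)
  hYX : ∀ i, Y i * X i = tser • (1 : Matrix (Fin s) (Fin s) Rser)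
  hcyc : ∀ i, cycProd X i = (tser ^ (n - k)) • (1 : Matrix (Fin s) (Fin s) Rser)

/-- A morphism of Cohen–Macaulay `B_{k,n}`-modules: a family of matrices
`F i` with `F i * X i = X' i * F (i-1)` and `F (i-1) * Y i = Y' i * F i`. -/
structure CMHom {k n s s' : ℕ} (M : CMMod k n s) (M' : CMMod k n s') : Type where
  F : ZMod n → Matrix (Fin s') (Fin s) Rser
  hX : ∀ i, F i * M.X i = M'.X i * F (i - 1)
  hY : ∀ i, F (i - 1) * M.Y i = M'.Y i * F i

/-- `M` is indecomposable: its only idempotent endomorphisms are `0` and the identity. -/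
def Indecomposable {k n s : ℕ} (M : CMMod k n s) : Prop :=
  ∀ f : CMHom M M, (∀ i, f.F i * f.F i = f.F i) → (∀ i, f.F i = 0) ∨ (∀ i, f.F i = 1)

/-- A short exact sequence `0 → A → E → B → 0` in `CM(B_{k,n})`: a pair of
morphisms that is exact at each index `i` as a sequence of `R`-modules. -/
structure CMses {k n sA sE sB : ℕ} (A : CMMod k n sA) (E : CMMod k n sE)
    (B : CMMod k n sB) : Type where
  emb : CMHom A E
  quo : CMHom E B
  inj : ∀ i, Function.Injective ((emb.F i).mulVecLin)
  exactness : ∀ i, LinearMap.range ((emb.F i).mulVecLin) = LinearMap.ker ((quo.F i).mulVecLin)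
  surj : ∀ i, Function.Surjective ((quo.F i).mulVecLin)

/-- A short exact sequence splits if some morphism `ρ : E → A` satisfies `ρ ∘ ι = id`. -/
def CMses.Splits {k n sA sE sB : ℕ} {A : CMMod k n sA} {E : CMMod k n sE} {B : CMMod k n sB}
    (S : CMses A E B) : Prop :=
  ∃ ρ : CMHom E A, ∀ i, ρ.F i * S.emb.F i = 1

/-- `M` is rigid: every short exact sequence `0 → M → E → M → 0` splits. -/
def Rigid {k n s : ℕ} (M : CMMod k n s) : Prop :=
  ∀ (sE : ℕ) (E : CMMod k n sE) (S : CMses M E M), S.Splits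

/-- `N` is the rank-1 module `L_I`: `X i = 1`, `Y i = t` for `i ∈ I`, and
`X i = t`, `Y i = 1` for `i ∉ I`. -/
def IsRankOne {k n : ℕ} (I : Finset (ZMod n)) (N : CMMod k n 1) : Prop :=
  (∀ i, N.X i = if i ∈ I then 1 else tser • 1) ∧
  (∀ i, N.Y i = if i ∈ I then tser • 1 else 1)

/-- `M` admits the filtration `L_{I₁} | L_{I₂} | ⋯ | L_{Iₘ}`: there are modules
`M = N₁, N₂, …, Nₘ = L_{Iₘ}` and short exact sequences
`0 → N_{j+1} → N_j → L_{I_j} → 0`. -/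
inductive HasFiltration {k n : ℕ} : {s : ℕ} → CMMod k n s → List (Finset (ZMod n)) → Prop
  | base {I : Finset (ZMod n)} {N : CMMod k n 1} : IsRankOne I N → HasFiltration N [I]
  | step {s s' : ℕ} {N : CMMod k n s} {M : CMMod k n s'} {Q : CMMod k n 1}
      {I : Finset (ZMod n)} {rest : List (Finset (ZMod n))} :
      IsRankOne I Q → HasFiltration N rest → Nonempty (CMses N M Q) →
      HasFiltration M (I :: rest)


/-- The label in `{1,…,n}` of a residue in `ℤ/n`. -/
def labelOfZ (n : ℕ) (z : ZMod n) : ℕ := if z.val = 0 then n else z.val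

/-- Insert an extra matrix `A` after position `j` of the cyclic family `X`:
the new family, indexed by `ℤ/(n+1)`, is `(X_1, …, X_j, A, X_{j+1}, …, X_n)`. -/
def incData {n s : ℕ} (j : ℕ) (X : ZMod n → Matrix (Fin s) (Fin s) Rser)
    (A : Matrix (Fin s) (Fin s) Rser) : ZMod (n + 1) → Matrix (Fin s) (Fin s) Rser :=
  fun i' =>
    if labelOfZ (n + 1) i' ≤ j then X ((labelOfZ (n + 1) i' : ℕ) : ZMod n)
    else if labelOfZ (n + 1) i' = j + 1 then A
    else X (((labelOfZ (n + 1) i' - 1 : ℕ) : ZMod n))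

/-- `M'` is the 1-increase `inc_j(M)`: the X-sequence is
`(X_1,…,X_j, Id, X_{j+1},…,X_n)` and the Y-sequence is
`(Y_1,…,Y_j, t·Id, Y_{j+1},…,Y_n)`. -/
def IsInc {k n s : ℕ} (j : ℕ) (M : CMMod k n s) (M' : CMMod (k + 1) (n + 1) s) : Prop :=
  M'.X = incData j M.X 1 ∧ M'.Y = incData j M.Y (tser • 1)

/-- `M'` is the 1-co-increase `incᶜ_j(M)`: insert `X = t·Id`, `Y = Id` after position `j`. -/
def IsCoInc {k n s : ℕ} (j : ℕ) (M : CMMod k n s) (M' : CMMod k (n + 1) s) : Prop :=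
  M'.X = incData j M.X (tser • 1) ∧ M'.Y = incData j M.Y 1

/-- The `(k+1)`-subset `I(j) = {i ∈ I : i ≤ j} ∪ {j+1} ∪ {i+1 : i ∈ I, i > j}`
of `{1,…,n+1}`, in terms of labels. -/
def incSet (n j : ℕ) (I : Finset (ZMod n)) : Finset (ZMod (n + 1)) :=
  ((I.filter fun z => labelOfZ n z ≤ j).image fun z => ((labelOfZ n z : ℕ) : ZMod (n + 1))) ∪
  {((j + 1 : ℕ) : ZMod (n + 1))} ∪
  ((I.filter fun z => j < labelOfZ n z).image fun z => ((labelOfZ n z + 1 : ℕ) : ZMod (n + 1)))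

lemma label_pos {m : ℕ} [NeZero m] (z : ZMod m) : 1 ≤ labelOfZ m z := by
  unfold labelOfZ
  split
  · exact Nat.one_le_iff_ne_zero.mpr (NeZero.ne m)
  · omega

lemma label_le {m : ℕ} [NeZero m] (z : ZMod m) : labelOfZ m z ≤ m := by
  unfold labelOfZ
  split
  · exact le_refl m
  · exact le_of_lt (ZMod.val_lt z)

lemma cast_label {m : ℕ} [NeZero m] (z : ZMod m) : ((labelOfZ m z : ℕ) : ZMod m) = z := by
  unfold labelOfZ
  split
  next h =>
    rw [ZMod.natCast_self]
    exact ((ZMod.val_eq_zero z).mp h).symm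
  next h => exact ZMod.natCast_rightInverse z

lemma label_cast {m : ℕ} (a : ℕ) (h1 : 1 ≤ a) (h2 : a ≤ m) :
    labelOfZ m ((a : ℕ) : ZMod m) = a := by
  haveI : NeZero m := ⟨by omega⟩
  rcases eq_or_lt_of_le h2 with h | h
  · subst h
    unfold labelOfZ
    rw [ZMod.natCast_self]
    simp
  · unfold labelOfZ
    rw [ZMod.val_cast_of_lt h]
    simp only [if_neg (by omega : ¬ a = 0)]

lemma cast_inj_label {m a b : ℕ} (ha1 : 1 ≤ a) (ha2 : a ≤ m) (hb1 : 1 ≤ b) (hb2 : b ≤ m)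
    (h : ((a : ℕ) : ZMod m) = ((b : ℕ) : ZMod m)) : a = b := by
  have := label_cast (m := m) a ha1 ha2
  rw [h, label_cast b hb1 hb2] at this
  omega

/-- every element of `ZMod m` is the cast of its label -/
lemma exists_label {m : ℕ} [NeZero m] (z : ZMod m) :
    ∃ a : ℕ, 1 ≤ a ∧ a ≤ m ∧ z = ((a : ℕ) : ZMod m) :=
  ⟨labelOfZ m z, label_pos z, label_le z, (cast_label z).symm⟩

lemma cast_sub_one {m : ℕ} (a : ℕ) (h1 : 1 ≤ a) (h2 : a ≤ m) :
    ((a : ℕ) : ZMod m) - 1 = (((if a = 1 then m else a - 1) : ℕ) : ZMod m) := by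
  split
  next h =>
    subst h
    simp [ZMod.natCast_self]
  next h =>
    have : ((a - 1 : ℕ) : ZMod m) = (a : ZMod m) - 1 := by
      push_cast [Nat.cast_sub h1]
      ring
    rw [this]


def oldIdx (n j : ℕ) (i' : ZMod (n + 1)) : ZMod n :=
  if labelOfZ (n + 1) i' ≤ j then ((labelOfZ (n + 1) i' : ℕ) : ZMod n)
  else if labelOfZ (n + 1) i' = j + 1 then ((j : ℕ) : ZMod n)
  else ((labelOfZ (n + 1) i' - 1 : ℕ) : ZMod n)

def newIdx (n j : ℕ) (i : ZMod n) : ZMod (n + 1) :=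
  if labelOfZ n i ≤ j then ((labelOfZ n i : ℕ) : ZMod (n + 1))
  else ((labelOfZ n i + 1 : ℕ) : ZMod (n + 1))

lemma incData_cast {n s : ℕ} (j : ℕ) (X : ZMod n → Matrix (Fin s) (Fin s) Rser)
    (A : Matrix (Fin s) (Fin s) Rser) (a : ℕ) (h1 : 1 ≤ a) (h2 : a ≤ n + 1) :
    incData j X A ((a : ℕ) : ZMod (n+1)) =
      if a ≤ j then X ((a : ℕ) : ZMod n)
      else if a = j + 1 then A else X (((a - 1 : ℕ) : ZMod n)) := by
  unfold incData
  rw [label_cast a h1 h2]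

lemma oldIdx_cast {n : ℕ} (j : ℕ) (a : ℕ) (h1 : 1 ≤ a) (h2 : a ≤ n + 1) :
    oldIdx n j ((a : ℕ) : ZMod (n+1)) =
      (((if a ≤ j then a else if a = j + 1 then j else a - 1) : ℕ) : ZMod n) := by
  unfold oldIdx
  rw [label_cast a h1 h2]
  split_ifs <;> rfl

lemma newIdx_cast {n : ℕ} (j : ℕ) (a : ℕ) (h1 : 1 ≤ a) (h2 : a ≤ n) :
    newIdx n j ((a : ℕ) : ZMod n) =
      (((if a ≤ j then a else a + 1) : ℕ) : ZMod (n+1)) := by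
  unfold newIdx
  rw [label_cast a h1 h2]
  split_ifs <;> rfl

lemma incData_eq_oldIdx {n s : ℕ} (j : ℕ) (X : ZMod n → Matrix (Fin s) (Fin s) Rser)
    (A : Matrix (Fin s) (Fin s) Rser) (i' : ZMod (n + 1))
    (h : labelOfZ (n + 1) i' ≠ j + 1) :
    incData j X A i' = X (oldIdx n j i') := by
  unfold incData oldIdx
  split_ifs <;> first | rfl | (exact absurd (by assumption) h)

lemma incData_at_ins {n s : ℕ} (j : ℕ) (X : ZMod n → Matrix (Fin s) (Fin s) Rser)
    (A : Matrix (Fin s) (Fin s) Rser) (i' : ZMod (n + 1))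
    (h : labelOfZ (n + 1) i' = j + 1) :
    incData j X A i' = A := by
  unfold incData
  rw [h]
  simp

-- step lemmas for oldIdx
lemma oldIdx_sub_one_ne {n j : ℕ} (hj : 1 ≤ j) (hj' : j ≤ n) (i' : ZMod (n + 1))
    (h : labelOfZ (n + 1) i' ≠ j + 1) :
    oldIdx n j (i' - 1) = oldIdx n j i' - 1 := by
  haveI : NeZero (n + 1) := ⟨Nat.succ_ne_zero n⟩
  obtain ⟨L, hL1, hL2, rfl⟩ := exists_label i'
  rw [label_cast L hL1 hL2] at h
  rw [cast_sub_one L hL1 hL2, oldIdx_cast j _ (by split_ifs <;> omega) (by split_ifs <;> omega),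
    oldIdx_cast j L hL1 hL2,
    cast_sub_one (if L ≤ j then L else if L = j + 1 then j else L - 1)
      (by split_ifs <;> omega) (by split_ifs <;> omega)]
  congr 1
  split_ifs <;> omega

lemma oldIdx_sub_one_eq {n j : ℕ} (hj : 1 ≤ j) (hj' : j ≤ n) (i' : ZMod (n + 1))
    (h : labelOfZ (n + 1) i' = j + 1) :
    oldIdx n j (i' - 1) = oldIdx n j i' := by
  haveI : NeZero (n + 1) := ⟨Nat.succ_ne_zero n⟩
  obtain ⟨L, hL1, hL2, rfl⟩ := exists_label i'
  rw [label_cast L hL1 hL2] at h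
  rw [cast_sub_one L hL1 hL2, oldIdx_cast j _ (by split_ifs <;> omega) (by split_ifs <;> omega),
    oldIdx_cast j L hL1 hL2]
  congr 1
  split_ifs <;> omega

lemma label_newIdx_ne {n j : ℕ} (hj : 1 ≤ j) (hj' : j ≤ n) (i : ZMod n) [NeZero n] :
    labelOfZ (n + 1) (newIdx n j i) ≠ j + 1 := by
  obtain ⟨a, ha1, ha2, rfl⟩ := exists_label i
  rw [newIdx_cast j a ha1 ha2, label_cast _ (by split_ifs <;> omega) (by split_ifs <;> omega)]
  split_ifs <;> omega

lemma oldIdx_newIdx {n j : ℕ} (hj : 1 ≤ j) (hj' : j ≤ n) (i : ZMod n) [NeZero n] :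
    oldIdx n j (newIdx n j i) = i := by
  obtain ⟨a, ha1, ha2, rfl⟩ := exists_label i
  rw [newIdx_cast j a ha1 ha2,
    oldIdx_cast j _ (by split_ifs <;> omega) (by split_ifs <;> omega)]
  congr 1
  split_ifs <;> omega

lemma newIdx_oldIdx {n j : ℕ} (hj : 1 ≤ j) (hj' : j ≤ n) (i' : ZMod (n + 1))
    (h : labelOfZ (n + 1) i' ≠ j + 1) (hn : 1 ≤ n) :
    newIdx n j (oldIdx n j i') = i' := by
  haveI : NeZero (n + 1) := ⟨Nat.succ_ne_zero n⟩
  obtain ⟨L, hL1, hL2, rfl⟩ := exists_label i'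
  rw [label_cast L hL1 hL2] at h
  rw [oldIdx_cast j L hL1 hL2,
    newIdx_cast j _ (by split_ifs <;> omega) (by split_ifs <;> omega)]
  congr 1
  split_ifs <;> omega

lemma newIdx_sub_one {n j : ℕ} (hj : 1 ≤ j) (hj' : j ≤ n) (i : ZMod n) [NeZero n] :
    newIdx n j i - 1 = newIdx n j (i - 1) ∨
    (newIdx n j i - 1 = (((j + 1 : ℕ)) : ZMod (n + 1)) ∧ i - 1 = ((j : ℕ) : ZMod n)) := by
  obtain ⟨a, ha1, ha2, rfl⟩ := exists_label i
  rw [newIdx_cast j a ha1 ha2,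
    cast_sub_one (if a ≤ j then a else a + 1) (by split_ifs <;> omega) (by split_ifs <;> omega),
    cast_sub_one a ha1 ha2,
    newIdx_cast j _ (by split_ifs <;> omega) (by split_ifs <;> omega)]
  by_cases hcase : (if (if a ≤ j then a else a + 1) = 1 then n + 1 else (if a ≤ j then a else a + 1) - 1) = j + 1
  · right
    constructor
    · rw [hcase]
    · congr 1
      split_ifs at hcase ⊢ <;> omega
  · left
    congr 1
    split_ifs at hcase ⊢ <;> omega

lemma tser_ne_zero : tser ≠ 0 := PowerSeries.X_ne_zero

lemma swap_scalar {s : ℕ} (P Q : Matrix (Fin s) (Fin s) Rser) (c : Rser) (hc : c ≠ 0)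
    (h : Q * P = c • (1 : Matrix (Fin s) (Fin s) Rser)) :
    P * Q = c • (1 : Matrix (Fin s) (Fin s) Rser) := by
  have hdet : Q.det * P.det = c ^ s := by
    rw [← Matrix.det_mul, h, Matrix.det_smul, Matrix.det_one, mul_one]
    simp
  have hP : P.det ≠ 0 := by
    intro h0
    rw [h0, mul_zero] at hdet
    exact pow_ne_zero s hc hdet.symm
  have h2 : (P * Q - c • 1) * P = 0 := by
    rw [Matrix.sub_mul, Matrix.mul_assoc, h, Matrix.smul_mul, Matrix.mul_smul,
      Matrix.one_mul, Matrix.mul_one, sub_self]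
  have h3 : (P * Q - c • 1) * (P * P.adjugate) = 0 := by
    rw [← Matrix.mul_assoc, h2, Matrix.zero_mul]
  rw [Matrix.mul_adjugate] at h3
  have h4 : ∀ a b, P.det * ((P * Q - c • (1 : Matrix (Fin s) (Fin s) Rser)) a b) = 0 := by
    intro a b
    have := congrFun (congrFun h3 a) b
    rw [Matrix.mul_smul, Matrix.mul_one] at this
    simpa [Matrix.smul_apply] using this
  have h5 : P * Q - c • 1 = 0 := by
    funext a b
    have := h4 a b
    rcases mul_eq_zero.mp this with h' | h'
    · exact absurd h' hP
    · simpa using h'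
  linear_combination (norm := abel) h5

lemma cycProd_eq {n s : ℕ} (X : ZMod n → Matrix (Fin s) (Fin s) Rser) (i : ZMod n) :
    cycProd X i = ((List.range n).map (fun r : ℕ => X (i - ((r : ℕ) : ZMod n)))).prod := by
  unfold cycProd
  simp only [List.bind_eq_flatMap, List.pure_def]
  rw [← List.map_eq_flatMap, List.map_map]
  rfl

lemma cycProd_rotate {m s : ℕ} (X : ZMod (m + 1) → Matrix (Fin s) (Fin s) Rser) (c : Rser)
    (hc : c ≠ 0) (b : ZMod (m + 1)) (h : cycProd X b = c • 1) : cycProd X (b + 1) = c • 1 := by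
  have hm : ((m : ℕ) : ZMod (m + 1)) = -1 := by
    have h0 : (((m + 1 : ℕ)) : ZMod (m + 1)) = 0 := ZMod.natCast_self (m + 1)
    push_cast at h0
    exact eq_neg_of_add_eq_zero_left h0
  have hsplit : cycProd X (b + 1) =
      X (b + 1) * ((List.range m).map fun r : ℕ => X (b - ((r : ℕ) : ZMod (m+1)))).prod := by
    rw [cycProd_eq, List.range_succ_eq_map, List.map_cons, List.prod_cons, List.map_map]
    congr 1
    · norm_num
    · congr 1
      refine List.map_congr_left fun r _ => ?_
      simp only [Function.comp_apply]
      congr 1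
      push_cast
      ring
  have hsplit2 : cycProd X b =
      ((List.range m).map fun r : ℕ => X (b - ((r : ℕ) : ZMod (m+1)))).prod * X (b + 1) := by
    rw [cycProd_eq, List.range_succ, List.map_append, List.prod_append, List.map_singleton,
      List.prod_singleton]
    congr 2
    rw [hm]
    ring
  rw [hsplit2] at h
  rw [hsplit]
  exact swap_scalar _ _ c hc h

lemma cycProd_all {m s : ℕ} (X : ZMod (m + 1) → Matrix (Fin s) (Fin s) Rser) (c : Rser)
    (hc : c ≠ 0) (b : ZMod (m + 1)) (h : cycProd X b = c • 1) :
    ∀ a, cycProd X a = c • 1 := by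
  have key : ∀ r : ℕ, cycProd X (b + (r : ZMod (m + 1))) = c • 1 := by
    intro r
    induction r with
    | zero => simpa using h
    | succ r ih =>
      have : b + ((r + 1 : ℕ) : ZMod (m + 1)) = (b + (r : ZMod (m + 1))) + 1 := by
        push_cast; ring
      rw [this]
      exact cycProd_rotate X c hc _ ih
  intro a
  have : a = b + (((a - b).val : ℕ) : ZMod (m + 1)) := by
    rw [ZMod.natCast_rightInverse (a - b)]
    ring
  rw [this]
  exact key _

/-- value of `incData` at a shifted inserted position -/
lemma incData_ins_sub {n s : ℕ} {j : ℕ} (hj : 1 ≤ j) (hj' : j ≤ n)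
    (X : ZMod n → Matrix (Fin s) (Fin s) Rser) (A : Matrix (Fin s) (Fin s) Rser)
    (r : ℕ) (hr1 : 1 ≤ r) (hr2 : r ≤ n) :
    incData j X A ((((j + 1 : ℕ)) : ZMod (n + 1)) - ((r : ℕ) : ZMod (n + 1))) =
      X (((j : ℕ) : ZMod n) - (((r - 1 : ℕ)) : ZMod n)) := by
  by_cases hc : r ≤ j
  · have e1 : (((j + 1 : ℕ)) : ZMod (n + 1)) - ((r : ℕ) : ZMod (n + 1)) =
        (((j + 1 - r : ℕ)) : ZMod (n + 1)) := by
      rw [Nat.cast_sub (by omega)]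
    rw [e1, incData_cast j X A _ (by omega) (by omega), if_pos (by omega : j + 1 - r ≤ j)]
    congr 1
    rw [Nat.cast_sub (by omega : r ≤ j + 1), Nat.cast_sub hr1]
    push_cast
    ring
  · have e1 : (((j + 1 : ℕ)) : ZMod (n + 1)) - ((r : ℕ) : ZMod (n + 1)) =
        (((j + n + 2 - r : ℕ)) : ZMod (n + 1)) := by
      rw [Nat.cast_sub (by omega)]
      have hz : ((n + 1 : ℕ) : ZMod (n + 1)) = 0 := ZMod.natCast_self _
      push_cast at hz ⊢
      linear_combination -hz
    rw [e1, incData_cast j X A _ (by omega) (by omega), if_neg (by omega), if_neg (by omega)]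
    have e3 : ((j + n + 2 - r - 1 : ℕ) : ZMod n) = ((j : ℕ) : ZMod n) - (((r - 1 : ℕ)) : ZMod n) := by
      have e2 : j + n + 2 - r - 1 = j + n + 1 - r := by omega
      rw [e2, Nat.cast_sub (by omega : r ≤ j + n + 1), Nat.cast_sub hr1]
      have hz : ((n : ℕ) : ZMod n) = 0 := ZMod.natCast_self _
      push_cast at hz ⊢
      linear_combination hz
    rw [e3]

lemma cycProd_incData_ins {k n s : ℕ} {j : ℕ} (hj : 1 ≤ j) (hj' : j ≤ n)
    (M : CMMod k n s) (A : Matrix (Fin s) (Fin s) Rser) :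
    cycProd (incData j M.X A) (((j + 1 : ℕ)) : ZMod (n + 1)) =
      A * ((tser ^ (n - k)) • (1 : Matrix (Fin s) (Fin s) Rser)) := by
  rw [cycProd_eq, List.range_succ_eq_map, List.map_cons, List.prod_cons, List.map_map]
  have h0 : incData j M.X A ((((j + 1 : ℕ)) : ZMod (n + 1)) - ((0 : ℕ) : ZMod (n + 1))) = A := by
    rw [Nat.cast_zero, sub_zero]
    exact incData_at_ins j M.X A _ (label_cast (j + 1) (by omega) (by omega))
  rw [h0]
  congr 1
  have h1 : (List.map ((fun r : ℕ => incData j M.X A ((((j + 1 : ℕ)) : ZMod (n + 1)) - ((r : ℕ) : ZMod (n + 1)))) ∘ Nat.succ) (List.range n)) =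
      List.map (fun r : ℕ => M.X (((j : ℕ) : ZMod n) - ((r : ℕ) : ZMod n))) (List.range n) := by
    refine List.map_congr_left fun r hr => ?_
    simp only [Function.comp_apply]
    have hrn : r < n := List.mem_range.mp hr
    have := incData_ins_sub hj hj' M.X A (r + 1) (by omega) (by omega)
    simpa using this
  rw [h1, ← cycProd_eq, M.hcyc]

def incModF {k n s : ℕ} (j : ℕ) (hk : k ≤ n) (hj : 1 ≤ j) (hj' : j ≤ n) (M : CMMod k n s) :
    CMMod (k + 1) (n + 1) s where
  X := incData j M.X 1
  Y := incData j M.Y (tser • 1)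
  hXY := by
    intro i
    haveI : NeZero (n + 1) := ⟨Nat.succ_ne_zero n⟩
    obtain ⟨a, h1, h2, rfl⟩ := exists_label i
    rw [incData_cast j M.X 1 a h1 h2, incData_cast j M.Y (tser • 1) a h1 h2]
    split_ifs
    · exact M.hXY _
    · rw [Matrix.one_mul]
    · exact M.hXY _
  hYX := by
    intro i
    haveI : NeZero (n + 1) := ⟨Nat.succ_ne_zero n⟩
    obtain ⟨a, h1, h2, rfl⟩ := exists_label i
    rw [incData_cast j M.X 1 a h1 h2, incData_cast j M.Y (tser • 1) a h1 h2]
    split_ifs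
    · exact M.hYX _
    · rw [Matrix.mul_one]
    · exact M.hYX _
  hcyc := by
    intro i
    have h := cycProd_incData_ins (k := k) hj hj' M (1 : Matrix (Fin s) (Fin s) Rser)
    rw [Matrix.one_mul] at h
    have e : n + 1 - (k + 1) = n - k := by omega
    rw [e]
    exact cycProd_all _ _ (pow_ne_zero _ tser_ne_zero) _ h i

def coincModF {k n s : ℕ} (j : ℕ) (hk : k ≤ n) (hj : 1 ≤ j) (hj' : j ≤ n) (M : CMMod k n s) :
    CMMod k (n + 1) s where
  X := incData j M.X (tser • 1)
  Y := incData j M.Y 1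
  hXY := by
    intro i
    haveI : NeZero (n + 1) := ⟨Nat.succ_ne_zero n⟩
    obtain ⟨a, h1, h2, rfl⟩ := exists_label i
    rw [incData_cast j M.X (tser • 1) a h1 h2, incData_cast j M.Y 1 a h1 h2]
    split_ifs
    · exact M.hXY _
    · rw [Matrix.mul_one]
    · exact M.hXY _
  hYX := by
    intro i
    haveI : NeZero (n + 1) := ⟨Nat.succ_ne_zero n⟩
    obtain ⟨a, h1, h2, rfl⟩ := exists_label i
    rw [incData_cast j M.X (tser • 1) a h1 h2, incData_cast j M.Y 1 a h1 h2]
    split_ifs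
    · exact M.hYX _
    · rw [Matrix.one_mul]
    · exact M.hYX _
  hcyc := by
    intro i
    have h := cycProd_incData_ins (k := k) hj hj' M (tser • (1 : Matrix (Fin s) (Fin s) Rser))
    have e : (tser • (1 : Matrix (Fin s) (Fin s) Rser)) * ((tser ^ (n - k)) • 1) =
        (tser ^ (n + 1 - k)) • (1 : Matrix (Fin s) (Fin s) Rser) := by
      rw [Matrix.smul_mul, Matrix.one_mul, smul_smul]
      congr 1
      rw [← pow_succ']
      congr 1
      omega
    rw [e] at h
    exact cycProd_all _ _ (pow_ne_zero _ tser_ne_zero) _ h i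

lemma indec_transfer {k k2 n s : ℕ} (j : ℕ) (hn : 1 ≤ n) (hj : 1 ≤ j) (hj' : j ≤ n)
    (M : CMMod k n s) (M2 : CMMod k2 (n + 1) s)
    (A B : Matrix (Fin s) (Fin s) Rser)
    (hX2 : M2.X = incData j M.X A) (hY2 : M2.Y = incData j M.Y B)
    (hAB : A = 1 ∨ B = 1) (hind : Indecomposable M) : Indecomposable M2 := by
  haveI : NeZero n := ⟨by omega⟩
  haveI : NeZero (n + 1) := ⟨Nat.succ_ne_zero n⟩
  intro f hf
  have hlab_ins : labelOfZ (n + 1) (((j + 1 : ℕ)) : ZMod (n + 1)) = j + 1 :=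
    label_cast _ (by omega) (by omega)
  have hins_sub : (((j + 1 : ℕ)) : ZMod (n + 1)) - 1 = ((j : ℕ) : ZMod (n + 1)) := by
    rw [cast_sub_one (j + 1) (by omega) (by omega)]
    congr 1
    rw [if_neg (by omega : ¬ j + 1 = 1)]
    omega
  have hprev : ((j : ℕ) : ZMod (n + 1)) = newIdx n j ((j : ℕ) : ZMod n) := by
    rw [newIdx_cast j j hj hj', if_pos le_rfl]
  have key : f.F (((j + 1 : ℕ)) : ZMod (n + 1)) = f.F ((((j + 1 : ℕ)) : ZMod (n + 1)) - 1) := by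
    rcases hAB with hA | hB
    · have h := f.hX (((j + 1 : ℕ)) : ZMod (n + 1))
      rw [hX2, incData_at_ins j M.X A _ hlab_ins, hA, Matrix.mul_one, Matrix.one_mul] at h
      exact h
    · have h := f.hY (((j + 1 : ℕ)) : ZMod (n + 1))
      rw [hY2, incData_at_ins j M.Y B _ hlab_ins, hB, Matrix.mul_one, Matrix.one_mul] at h
      exact h.symm
  have hFnew : ∀ i : ZMod n, f.F (newIdx n j i - 1) = f.F (newIdx n j (i - 1)) := by
    intro i
    rcases newIdx_sub_one hj hj' i with h | ⟨ha, hb⟩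
    · rw [h]
    · rw [ha, key, hins_sub, hb, hprev]
  have hXval : ∀ i : ZMod n, M2.X (newIdx n j i) = M.X i := by
    intro i
    rw [hX2, incData_eq_oldIdx j M.X A _ (label_newIdx_ne hj hj' i), oldIdx_newIdx hj hj' i]
  have hYval : ∀ i : ZMod n, M2.Y (newIdx n j i) = M.Y i := by
    intro i
    rw [hY2, incData_eq_oldIdx j M.Y B _ (label_newIdx_ne hj hj' i), oldIdx_newIdx hj hj' i]
  let g : CMHom M M :=
    { F := fun i => f.F (newIdx n j i)
      hX := fun i => by
        have h := f.hX (newIdx n j i)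
        rw [hXval i, hFnew i] at h
        exact h
      hY := fun i => by
        have h := f.hY (newIdx n j i)
        rw [hYval i, hFnew i] at h
        exact h }
  rcases hind g (fun i => hf (newIdx n j i)) with h0 | h0
  · left
    intro i'
    by_cases hc : labelOfZ (n + 1) i' = j + 1
    · have hi : i' = (((j + 1 : ℕ)) : ZMod (n + 1)) := by
        rw [← cast_label i', hc]
      rw [hi, key, hins_sub, hprev]
      exact h0 _
    · have hi : i' = newIdx n j (oldIdx n j i') := (newIdx_oldIdx hj hj' i' hc hn).symm
      rw [hi]
      exact h0 _
  · right
    intro i'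
    by_cases hc : labelOfZ (n + 1) i' = j + 1
    · have hi : i' = (((j + 1 : ℕ)) : ZMod (n + 1)) := by
        rw [← cast_label i', hc]
      rw [hi, key, hins_sub, hprev]
      exact h0 _
    · have hi : i' = newIdx n j (oldIdx n j i') := (newIdx_oldIdx hj hj' i' hc hn).symm
      rw [hi]
      exact h0 _

def incHomF {k n s s' : ℕ} (j : ℕ) (hk : k ≤ n) (hj : 1 ≤ j) (hj' : j ≤ n)
    {M : CMMod k n s} {M' : CMMod k n s'} (φ : CMHom M M') :
    CMHom (incModF j hk hj hj' M) (incModF j hk hj hj' M') where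
  F := fun i' => φ.F (oldIdx n j i')
  hX := by
    intro i'
    simp only [incModF]
    by_cases hc : labelOfZ (n + 1) i' = j + 1
    · rw [incData_at_ins _ _ _ _ hc, incData_at_ins _ _ _ _ hc,
        oldIdx_sub_one_eq hj hj' i' hc, Matrix.mul_one, Matrix.one_mul]
    · rw [incData_eq_oldIdx _ _ _ _ hc, incData_eq_oldIdx _ _ _ _ hc,
        oldIdx_sub_one_ne hj hj' i' hc]
      exact φ.hX _
  hY := by
    intro i'
    simp only [incModF]
    by_cases hc : labelOfZ (n + 1) i' = j + 1
    · rw [incData_at_ins _ _ _ _ hc, incData_at_ins _ _ _ _ hc,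
        oldIdx_sub_one_eq hj hj' i' hc, Matrix.mul_smul, Matrix.smul_mul,
        Matrix.mul_one, Matrix.one_mul]
    · rw [incData_eq_oldIdx _ _ _ _ hc, incData_eq_oldIdx _ _ _ _ hc,
        oldIdx_sub_one_ne hj hj' i' hc]
      exact φ.hY _

def incSesF {k n sA sE sB : ℕ} (j : ℕ) (hk : k ≤ n) (hj : 1 ≤ j) (hj' : j ≤ n)
    {N : CMMod k n sA} {M : CMMod k n sE} {Q : CMMod k n sB} (S : CMses N M Q) :
    CMses (incModF j hk hj hj' N) (incModF j hk hj hj' M) (incModF j hk hj hj' Q) where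
  emb := incHomF j hk hj hj' S.emb
  quo := incHomF j hk hj hj' S.quo
  inj := fun i' => S.inj (oldIdx n j i')
  exactness := fun i' => S.exactness (oldIdx n j i')
  surj := fun i' => S.surj (oldIdx n j i')

lemma mem_incSet_iff {n j : ℕ} (hj : 1 ≤ j) (hj' : j ≤ n) (I : Finset (ZMod n))
    (a : ℕ) (h1 : 1 ≤ a) (h2 : a ≤ n + 1) :
    (((a : ℕ) : ZMod (n + 1)) ∈ incSet n j I) ↔
      ((a ≤ j ∧ ((a : ℕ) : ZMod n) ∈ I) ∨ a = j + 1 ∨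
        (j + 2 ≤ a ∧ (((a - 1 : ℕ)) : ZMod n) ∈ I)) := by
  haveI : NeZero n := ⟨by omega⟩
  simp only [incSet, Finset.mem_union, Finset.mem_image, Finset.mem_filter,
    Finset.mem_singleton]
  constructor
  · rintro ((⟨z, ⟨hz, hzj⟩, hze⟩ | he) | ⟨z, ⟨hz, hzj⟩, hze⟩)
    · have : labelOfZ n z = a :=
        cast_inj_label (label_pos z) (le_trans (label_le z) (Nat.le_succ n)) h1 h2 hze
      left
      refine ⟨by omega, ?_⟩
      rw [← this, cast_label z]
      exact hz
    · right; left
      exact (cast_inj_label (by omega) (by omega) h1 h2 he.symm).symm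
    · have hle := label_le z
      have hpos := label_pos z
      have heq : labelOfZ n z + 1 = a :=
        cast_inj_label (by omega) (by omega) h1 h2 hze
      right; right
      refine ⟨by omega, ?_⟩
      have e : a - 1 = labelOfZ n z := by omega
      rw [e, cast_label z]
      exact hz
  · rintro (⟨haj, hmem⟩ | rfl | ⟨haj, hmem⟩)
    · left; left
      refine ⟨((a : ℕ) : ZMod n), ⟨hmem, ?_⟩, ?_⟩
      · rw [label_cast a h1 (by omega)]
        exact haj
      · rw [label_cast a h1 (by omega)]
    · left; right; rfl
    · right
      refine ⟨(((a - 1 : ℕ)) : ZMod n), ⟨hmem, ?_⟩, ?_⟩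
      · rw [label_cast (a - 1) (by omega) (by omega)]
        omega
      · rw [label_cast (a - 1) (by omega) (by omega)]
        congr 1
        omega

lemma isRankOne_inc {k n : ℕ} (j : ℕ) (hk : k ≤ n) (hj : 1 ≤ j) (hj' : j ≤ n)
    {I : Finset (ZMod n)} {N : CMMod k n 1} (h : IsRankOne I N) :
    IsRankOne (incSet n j I) (incModF j hk hj hj' N) := by
  haveI : NeZero (n + 1) := ⟨Nat.succ_ne_zero n⟩
  constructor
  · intro i'
    obtain ⟨a, h1, h2, rfl⟩ := exists_label i'
    show incData j N.X 1 ((a : ℕ) : ZMod (n + 1)) = _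
    rw [incData_cast j N.X 1 a h1 h2]
    by_cases hc1 : a ≤ j
    · rw [if_pos hc1, h.1, if_congr (mem_incSet_iff hj hj' I a h1 h2) rfl rfl]
      by_cases hc2 : ((a : ℕ) : ZMod n) ∈ I
      · rw [if_pos hc2, if_pos (Or.inl ⟨hc1, hc2⟩)]
      · rw [if_neg hc2, if_neg (by rintro (⟨_, hm⟩ | he | ⟨hge, _⟩) <;> first | exact hc2 hm | omega)]
    · rw [if_neg hc1]
      by_cases hc3 : a = j + 1
      · rw [if_pos hc3, if_pos]
        rw [mem_incSet_iff hj hj' I a h1 h2]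
        exact Or.inr (Or.inl hc3)
      · rw [if_neg hc3, h.1, if_congr (mem_incSet_iff hj hj' I a h1 h2) rfl rfl]
        by_cases hc2 : (((a - 1 : ℕ)) : ZMod n) ∈ I
        · rw [if_pos hc2, if_pos (Or.inr (Or.inr ⟨by omega, hc2⟩))]
        · rw [if_neg hc2, if_neg (by rintro (⟨hle, _⟩ | he | ⟨_, hm⟩) <;> first | exact hc2 hm | omega)]
  · intro i'
    obtain ⟨a, h1, h2, rfl⟩ := exists_label i'
    show incData j N.Y (tser • 1) ((a : ℕ) : ZMod (n + 1)) = _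
    rw [incData_cast j N.Y (tser • 1) a h1 h2]
    by_cases hc1 : a ≤ j
    · rw [if_pos hc1, h.2, if_congr (mem_incSet_iff hj hj' I a h1 h2) rfl rfl]
      by_cases hc2 : ((a : ℕ) : ZMod n) ∈ I
      · rw [if_pos hc2, if_pos (Or.inl ⟨hc1, hc2⟩)]
      · rw [if_neg hc2, if_neg (by rintro (⟨_, hm⟩ | he | ⟨hge, _⟩) <;> first | exact hc2 hm | omega)]
    · rw [if_neg hc1]
      by_cases hc3 : a = j + 1
      · rw [if_pos hc3, if_pos]
        rw [mem_incSet_iff hj hj' I a h1 h2]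
        exact Or.inr (Or.inl hc3)
      · rw [if_neg hc3, h.2, if_congr (mem_incSet_iff hj hj' I a h1 h2) rfl rfl]
        by_cases hc2 : (((a - 1 : ℕ)) : ZMod n) ∈ I
        · rw [if_pos hc2, if_pos (Or.inr (Or.inr ⟨by omega, hc2⟩))]
        · rw [if_neg hc2, if_neg (by rintro (⟨hle, _⟩ | he | ⟨_, hm⟩) <;> first | exact hc2 hm | omega)]

lemma hasFiltration_inc {k n : ℕ} (hk : k ≤ n) (j : ℕ) (hj : 1 ≤ j) (hj' : j ≤ n)
    {s : ℕ} (M : CMMod k n s) (lst : List (Finset (ZMod n))) (h : HasFiltration M lst) :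
    HasFiltration (incModF j hk hj hj' M) (lst.map (incSet n j)) := by
  induction h with
  | base hI => exact HasFiltration.base (isRankOne_inc j hk hj hj' hI)
  | step hI hrest hses ih =>
      exact HasFiltration.step (isRankOne_inc j hk hj hj' hI) ih ⟨incSesF j hk hj hj' hses.some⟩

lemma CMMod.ext' {k n s : ℕ} {M N : CMMod k n s} (hX : M.X = N.X) (hY : M.Y = N.Y) :
    M = N := by
  cases M; cases N; simp_all

/-- 1-increases and 1-co-increases of indecomposables are indecomposable;
moreover the 1-increase of a module filtered by `L_{I_1} | ⋯ | L_{I_m}` is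
filtered by `L_{I_1(j)} | ⋯ | L_{I_m(j)}`. -/
theorem inc_indecomposable_and_filtration (k n : ℕ) (hk : 1 ≤ k) (hkn : k < n)
    (s : ℕ) (M : CMMod k n s) (hind : Indecomposable M)
    (j : ℕ) (hj : 1 ≤ j) (hj' : j ≤ n)
    (M' : CMMod (k + 1) (n + 1) s) (hM' : IsInc j M M')
    (M'' : CMMod k (n + 1) s) (hM'' : IsCoInc j M M'') :
    Indecomposable M' ∧ Indecomposable M'' ∧
    ∀ lst : List (Finset (ZMod n)), HasFiltration M lst →
      HasFiltration M' (lst.map (incSet n j)) := by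
  have hk' : k ≤ n := le_of_lt hkn
  refine ⟨?_, ?_, ?_⟩
  · exact indec_transfer j (by omega) hj hj' M M' 1 (tser • 1) hM'.1 hM'.2 (Or.inl rfl) hind
  · exact indec_transfer j (by omega) hj hj' M M'' (tser • 1) 1 hM''.1 hM''.2 (Or.inr rfl) hind
  · intro lst h
    have e : M' = incModF j hk' hj hj' M := CMMod.ext' hM'.1 hM'.2
    rw [e]
    exact hasFiltration_inc hk' j hj hj' M lst h

end GCC
end
end

section
/- Let 1 ≤ k < n, let M be a rigid indecomposable Cohen–Macaulay B_{k,n}-module, and let j ∈ {1,…,n}. Then inc_j(M) is rigid in CM(B_{k+1,n+1}) and inc^c_j(M) is rigid in CM(B_{k,n+1}), i.e. every short exact sequence 0 → inc_j(M) → E → inc_j(M) → 0 of Cohen–Macaulay B_{k+1,n+1}-modules splits, and likewise for inc^c_j(M) over B_{k,n+1}. -/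
/-!
At the inserted vertex `p`, `inc_j(M)` has `x_p = Id` (and `incᶜ_j(M)` has `y_p = Id`). In a short
exact sequence `0 → inc_j(M) → E → inc_j(M) → 0` the square of `x_p` between the two copies of
`inc_j(M)` makes `x_p` on `E` surjective, hence invertible, so `E` has a corner
`x_p = t^a C`, `y_p = t^b C⁻¹` at `p`. Absorbing `C` into the next arrow contracts `E` to a
`B_{k,n}`-module `E₀`: the cyclic relation loses exactly the factor `t^a`. Contraction is
functorial on modules with corners and sends `inc_j(M)` back to `M`, so the sequence contracts to
`0 → M → E₀ → M → 0`. This splits by rigidity of `M`, and the retraction extends over `p` again.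
-/

open scoped Classical

noncomputable section

namespace GCC

section PathProd

variable {G M : Type*} [AddGroupWithOne G] [Monoid M]

def pathProd (f : G → M) (i : G) (l : ℕ) : M :=
  ((List.range l).map fun r : ℕ => f (i - r)).prod

theorem pathProd_succ (f : G → M) (i : G) (l : ℕ) :
    pathProd f i (l + 1) = f i * pathProd f (i - 1) l := by
  simp only [pathProd, List.range_succ_eq_map, List.map_cons, List.map_map, List.prod_cons,
    Nat.cast_zero, sub_zero, Function.comp_def, Nat.cast_succ, sub_add_eq_sub_sub_swap]

theorem pathProd_succ' (f : G → M) (i : G) (l : ℕ) :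
    pathProd f i (l + 1) = pathProd f i l * f (i - l) := by
  simp only [pathProd, List.range_succ, List.map_append, List.prod_append, List.map_singleton,
    List.prod_singleton]

theorem pathProd_congr {G' : Type*} [AddGroupWithOne G'] {f : G → M} {g : G' → M} {i : G}
    {i' : G'} {l : ℕ} (h : ∀ r < l, f (i - r) = g (i' - r)) : pathProd f i l = pathProd g i' l :=
  congrArg List.prod <| List.map_congr_left fun r hr => h r (List.mem_range.mp hr)

end PathProd

-- `cycProd` pushes `List.range n` into `ZMod n` through the list monad, so this is not `rfl`.
theorem cycProd_eq_pathProd {n s : ℕ} (X : ZMod n → Matrix (Fin s) (Fin s) Rser) (i : ZMod n) :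
    cycProd X i = pathProd X i n := by
  simp only [cycProd, pathProd, List.bind_eq_flatMap, List.pure_def, ← List.map_eq_flatMap,
    List.map_map, Function.comp_def]

theorem tser_pow_smul_inj {a b : ℕ} (e : ℕ) {A B : Matrix (Fin a) (Fin b) Rser} :
    tser ^ e • A = tser ^ e • B ↔ A = B :=
  smul_right_inj (pow_ne_zero e PowerSeries.X_ne_zero)

theorem cycProd_add_one_mul {n s : ℕ} [NeZero n] (X : ZMod n → Matrix (Fin s) (Fin s) Rser)
    (i : ZMod n) : cycProd X (i + 1) * X (i + 1) = X (i + 1) * cycProd X i := by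
  obtain ⟨m, rfl⟩ := Nat.exists_eq_add_one_of_ne_zero (NeZero.ne n)
  have hm : i - (m : ZMod (m + 1)) = i + 1 := by
    linear_combination -ZMod.natCast_self' m
  rw [cycProd_eq_pathProd, cycProd_eq_pathProd, pathProd_succ, pathProd_succ',
    add_sub_cancel_right, hm, mul_assoc]

theorem cycProd_eq_smul_one_of_eq {n s : ℕ} [NeZero n]
    {X Y : ZMod n → Matrix (Fin s) (Fin s) Rser} (hXY : ∀ i, X i * Y i = tser • 1) {c : ℕ}
    {i₀ : ZMod n} (h : cycProd X i₀ = tser ^ c • 1) (i : ZMod n) :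
    cycProd X i = tser ^ c • 1 := by
  have step : ∀ i, cycProd X i = tser ^ c • 1 → cycProd X (i + 1) = tser ^ c • 1 := by
    intro i hi
    rw [← tser_pow_smul_inj 1]
    have := congrArg (· * Y (i + 1)) (cycProd_add_one_mul X i)
    simp only [hi, mul_assoc, hXY, Matrix.mul_smul, Matrix.smul_mul, mul_one] at this
    simp only [pow_one, this, smul_smul, mul_comm]
  have key : ∀ m : ℕ, cycProd X (i₀ + m) = tser ^ c • 1 := by
    intro m
    induction m with
    | zero => simpa using h
    | succ m ih => simpa [add_assoc] using step _ ih
  simpa using key (i - i₀).val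

-- `Z` is the middle map of a morphism of short exact sequences whose outer maps are identities.
open Matrix in
theorem Matrix.isUnit_of_exact {R m ι κ : Type*} [CommRing R] [Fintype m] [DecidableEq m]
    [Fintype ι] {Z : Matrix m m R} {e₀ e₁ : Matrix m ι R} {q₀ q₁ : Matrix κ m R}
    (he : e₁ = Z * e₀) (hq : q₁ * Z = q₀) (hq₀ : Function.Surjective q₀.mulVecLin)
    (hex : LinearMap.range e₁.mulVecLin = LinearMap.ker q₁.mulVecLin) : IsUnit Z := by
  rw [← Matrix.mulVec_surjective_iff_isUnit]
  intro w
  obtain ⟨v, hv⟩ := hq₀ (q₁ *ᵥ w)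
  have hker : w - Z *ᵥ v ∈ LinearMap.ker q₁.mulVecLin := by
    simp [Matrix.mulVec_sub, ← hq, ← hv, Matrix.mulVec_mulVec]
  rw [← hex] at hker
  obtain ⟨u, hu⟩ := hker
  refine ⟨v + e₀ *ᵥ u, ?_⟩
  simp only [Matrix.mulVecLin_apply, he, ← Matrix.mulVec_mulVec] at hu
  rw [Matrix.mulVec_add, hu, add_sub_cancel]

section Labels

variable {n : ℕ} [NeZero n]

theorem one_le_labelOfZ (z : ZMod n) : 1 ≤ labelOfZ n z := by
  unfold labelOfZ
  split_ifs
  · exact Nat.one_le_iff_ne_zero.mpr (NeZero.ne n)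
  · omega

theorem labelOfZ_le (z : ZMod n) : labelOfZ n z ≤ n := by
  unfold labelOfZ
  split_ifs
  · rfl
  · exact (ZMod.val_lt z).le

theorem natCast_labelOfZ (z : ZMod n) : (labelOfZ n z : ZMod n) = z := by
  unfold labelOfZ
  split_ifs with h
  · rw [ZMod.natCast_self, eq_comm, ← ZMod.val_eq_zero, h]
  · exact ZMod.natCast_zmod_val z

theorem labelOfZ_injective : Function.Injective (labelOfZ n) :=
  Function.LeftInverse.injective natCast_labelOfZ

theorem labelOfZ_natCast {a : ℕ} (h₁ : 1 ≤ a) (h₂ : a ≤ n) : labelOfZ n a = a := by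
  rcases h₂.lt_or_eq with h | rfl
  · rw [labelOfZ, ZMod.val_cast_of_lt h, if_neg (by omega)]
  · simp [labelOfZ]

theorem labelOfZ_add_one (z : ZMod n) :
    labelOfZ n (z + 1) = if labelOfZ n z = n then 1 else labelOfZ n z + 1 := by
  have h₁ := one_le_labelOfZ z
  have h₂ := labelOfZ_le z
  conv_lhs => rw [← natCast_labelOfZ z]
  split_ifs with h
  · rw [h, ZMod.natCast_self, zero_add, ← Nat.cast_one, labelOfZ_natCast le_rfl (by omega)]
  · rw [← Nat.cast_add_one, labelOfZ_natCast (by omega) (by omega)]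

theorem labelOfZ_sub_one (z : ZMod n) :
    labelOfZ n (z - 1) = if labelOfZ n z = 1 then n else labelOfZ n z - 1 := by
  have h := labelOfZ_add_one (z - 1)
  have h₁ := one_le_labelOfZ (z - 1)
  have h₂ := labelOfZ_le (z - 1)
  rw [sub_add_cancel] at h
  split_ifs at h ⊢ <;> omega

end Labels

theorem sub_one_sub_natCast_ne {n r : ℕ} (z : ZMod n) (hr : r + 1 < n) : z - 1 - r ≠ z := by
  rw [sub_sub, ne_eq, sub_eq_self, ← Nat.cast_one, ← Nat.cast_add, add_comm,
    ZMod.natCast_eq_zero_iff]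
  exact Nat.not_dvd_of_pos_of_lt (by omega) hr

/- The old vertex `z : ℤ/n`, read through its label in `{1, …, n}`, sits at `embIdx j z` in
`ℤ/(n+1)`; `insIdx n j` is the inserted vertex and `nextIdx n j` the old vertex following it. -/
section Positions

def insIdx (n j : ℕ) : ZMod (n + 1) := ((j + 1 : ℕ) : ZMod (n + 1))

def nextIdx (n j : ℕ) : ZMod n := ((j + 1 : ℕ) : ZMod n)

def embIdx {n : ℕ} (j : ℕ) (z : ZMod n) : ZMod (n + 1) :=
  ((if labelOfZ n z ≤ j then labelOfZ n z else labelOfZ n z + 1 : ℕ) : ZMod (n + 1))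

def projIdx {n : ℕ} (j : ℕ) (i : ZMod (n + 1)) : ZMod n :=
  ((if labelOfZ (n + 1) i ≤ j then labelOfZ (n + 1) i else labelOfZ (n + 1) i - 1 : ℕ) : ZMod n)

variable {n j : ℕ} [NeZero n] (hj : 1 ≤ j) (hj' : j ≤ n)

theorem labelOfZ_embIdx (z : ZMod n) : labelOfZ (n + 1) (embIdx j z) =
    if labelOfZ n z ≤ j then labelOfZ n z else labelOfZ n z + 1 := by
  have h₁ := one_le_labelOfZ z
  have h₂ := labelOfZ_le z
  rw [embIdx, labelOfZ_natCast] <;> split_ifs <;> omega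

theorem incData_embIdx {s : ℕ} (X : ZMod n → Matrix (Fin s) (Fin s) Rser)
    (A : Matrix (Fin s) (Fin s) Rser) (z : ZMod n) : incData j X A (embIdx j z) = X z := by
  have := one_le_labelOfZ z
  unfold incData
  rw [labelOfZ_embIdx]
  split_ifs <;> first | omega | simp [natCast_labelOfZ]

include hj'

omit [NeZero n] in
theorem labelOfZ_insIdx : labelOfZ (n + 1) (insIdx n j) = j + 1 :=
  labelOfZ_natCast (by omega) (by omega)

theorem embIdx_ne_insIdx (z : ZMod n) : embIdx j z ≠ insIdx n j := by
  intro h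
  have := congrArg (labelOfZ (n + 1)) h
  rw [labelOfZ_embIdx, labelOfZ_insIdx hj'] at this
  split_ifs at this <;> omega

omit [NeZero n] in
theorem incData_insIdx {s : ℕ} (X : ZMod n → Matrix (Fin s) (Fin s) Rser)
    (A : Matrix (Fin s) (Fin s) Rser) : incData j X A (insIdx n j) = A := by
  simp [incData, labelOfZ_insIdx hj']

include hj

theorem labelOfZ_nextIdx : labelOfZ n (nextIdx n j) = if j = n then 1 else j + 1 := by
  rw [nextIdx, Nat.cast_succ, labelOfZ_add_one, labelOfZ_natCast hj hj']

theorem labelOfZ_projIdx (i : ZMod (n + 1)) : labelOfZ n (projIdx j i) =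
    if labelOfZ (n + 1) i ≤ j then labelOfZ (n + 1) i else labelOfZ (n + 1) i - 1 := by
  have h₁ := one_le_labelOfZ i
  have h₂ := labelOfZ_le i
  rw [projIdx, labelOfZ_natCast] <;> split_ifs <;> omega

theorem projIdx_embIdx (z : ZMod n) : projIdx j (embIdx j z) = z := by
  apply labelOfZ_injective
  have := one_le_labelOfZ z
  rw [labelOfZ_projIdx hj hj', labelOfZ_embIdx]
  split_ifs <;> omega

theorem embIdx_projIdx {i : ZMod (n + 1)} (h : i ≠ insIdx n j) : embIdx j (projIdx j i) = i := by
  apply labelOfZ_injective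
  have hi : labelOfZ (n + 1) i ≠ j + 1 := by
    rw [← labelOfZ_insIdx hj']
    exact labelOfZ_injective.ne h
  have := one_le_labelOfZ i
  rw [labelOfZ_embIdx, labelOfZ_projIdx hj hj']
  split_ifs <;> omega

theorem embIdx_nextIdx : embIdx j (nextIdx n j) = insIdx n j + 1 := by
  apply labelOfZ_injective
  rw [labelOfZ_embIdx, labelOfZ_add_one, labelOfZ_nextIdx hj hj', labelOfZ_insIdx hj']
  split_ifs <;> omega

theorem embIdx_sub_one {z : ZMod n} (h : z ≠ nextIdx n j) :
    embIdx j (z - 1) = embIdx j z - 1 := by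
  apply labelOfZ_injective
  have hz : labelOfZ n z ≠ if j = n then 1 else j + 1 := by
    rw [← labelOfZ_nextIdx hj hj']
    exact labelOfZ_injective.ne h
  have h₁ := one_le_labelOfZ z
  have h₂ := labelOfZ_le z
  rw [labelOfZ_embIdx, labelOfZ_sub_one, labelOfZ_sub_one, labelOfZ_embIdx]
  split_ifs at hz ⊢ <;> omega

theorem embIdx_nextIdx_sub_one : embIdx j (nextIdx n j - 1) = insIdx n j - 1 := by
  apply labelOfZ_injective
  rw [labelOfZ_embIdx, labelOfZ_sub_one, labelOfZ_sub_one, labelOfZ_nextIdx hj hj',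
    labelOfZ_insIdx hj']
  split_ifs <;> omega

theorem embIdx_nextIdx_sub {r : ℕ} (hr : r + 1 < n) :
    embIdx j (nextIdx n j - 1 - (r : ZMod n)) = insIdx n j - 1 - (r : ZMod (n + 1)) := by
  induction r with
  | zero => simpa using embIdx_nextIdx_sub_one hj hj'
  | succ r ih =>
    push_cast
    rw [← sub_sub, embIdx_sub_one hj hj' (sub_one_sub_natCast_ne _ (by omega)), ih (by omega),
      sub_sub _ (r : ZMod (n + 1))]

end Positions

structure IsCorner {k m s : ℕ} (p : ZMod m) (a b : ℕ) (E : CMMod k m s)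
    (C D : Matrix (Fin s) (Fin s) Rser) : Prop where
  mul_inv : C * D = 1
  inv_mul : D * C = 1
  X_eq : E.X p = tser ^ a • C
  Y_eq : E.Y p = tser ^ b • D

section Corner

variable {k m sA sB : ℕ} {p : ZMod m} {a b : ℕ} {A : CMMod k m sA} {B : CMMod k m sB}
  {CA DA : Matrix (Fin sA) (Fin sA) Rser} {CB DB : Matrix (Fin sB) (Fin sB) Rser}

theorem CMHom.hY_add_one (f : CMHom A B) (i : ZMod m) :
    f.F i * A.Y (i + 1) = B.Y (i + 1) * f.F (i + 1) := by
  simpa using f.hY (i + 1)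

theorem CMHom.corner_X (f : CMHom A B) (hA : IsCorner p a b A CA DA)
    (hB : IsCorner p a b B CB DB) : f.F p * CA = CB * f.F (p - 1) := by
  rw [← tser_pow_smul_inj a]
  simpa only [hA.X_eq, hB.X_eq, Matrix.mul_smul, Matrix.smul_mul] using f.hX p

theorem CMHom.corner_Y (f : CMHom A B) (hA : IsCorner p a b A CA DA)
    (hB : IsCorner p a b B CB DB) : f.F (p - 1) * DA = DB * f.F p := by
  rw [← tser_pow_smul_inj b]
  simpa only [hA.Y_eq, hB.Y_eq, Matrix.mul_smul, Matrix.smul_mul] using f.hY p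

theorem CMses.isUnit_X {sE : ℕ} {E : CMMod k m sE} (S : CMses A E B) (hA : A.X p = 1)
    (hB : B.X p = 1) : IsUnit (E.X p) := by
  have he : S.emb.F p = E.X p * S.emb.F (p - 1) := by simpa [hA] using S.emb.hX p
  have hq : S.quo.F p * E.X p = S.quo.F (p - 1) := by simpa [hB] using S.quo.hX p
  exact Matrix.isUnit_of_exact he hq (S.surj (p - 1)) (S.exactness p)

theorem CMses.isUnit_Y {sE : ℕ} {E : CMMod k m sE} (S : CMses A E B) (hA : A.Y p = 1)
    (hB : B.Y p = 1) : IsUnit (E.Y p) := by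
  have he : S.emb.F (p - 1) = E.Y p * S.emb.F p := by simpa [hA] using S.emb.hY p
  have hq : S.quo.F (p - 1) * E.Y p = S.quo.F p := by simpa [hB] using S.quo.hY p
  exact Matrix.isUnit_of_exact he hq (S.surj p) (S.exactness (p - 1))

theorem isCorner_of_isUnit_X (h : IsUnit (A.X p)) : IsCorner p 0 1 A (A.X p) (A.X p)⁻¹ := by
  rw [Matrix.isUnit_iff_isUnit_det] at h
  refine ⟨Matrix.mul_nonsing_inv _ h, Matrix.nonsing_inv_mul _ h, by rw [pow_zero, one_smul],
    ?_⟩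
  rw [pow_one, ← Matrix.nonsing_inv_mul_cancel_left (A.X p) (A.Y p) h, A.hXY, Matrix.mul_smul,
    mul_one]

theorem isCorner_of_isUnit_Y (h : IsUnit (A.Y p)) : IsCorner p 1 0 A (A.Y p)⁻¹ (A.Y p) := by
  rw [Matrix.isUnit_iff_isUnit_det] at h
  refine ⟨Matrix.nonsing_inv_mul _ h, Matrix.mul_nonsing_inv _ h, ?_,
    by rw [pow_zero, one_smul]⟩
  rw [pow_one, ← Matrix.mul_nonsing_inv_cancel_right (A.Y p) (A.X p) h, A.hXY, Matrix.smul_mul,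
    one_mul]

end Corner

/- `N` is `E` with the vertex `insIdx n j` removed: the two arrows through it are composed and the
scalars `t ^ a`, `t ^ b` of the corner are dropped. -/
structure IsContraction {k k' n s : ℕ} (j a b : ℕ) (N : CMMod k n s) (E : CMMod k' (n + 1) s)
    (C D : Matrix (Fin s) (Fin s) Rser) : Prop extends IsCorner (insIdx n j) a b E C D where
  X_nextIdx : N.X (nextIdx n j) = E.X (insIdx n j + 1) * C
  Y_nextIdx : N.Y (nextIdx n j) = D * E.Y (insIdx n j + 1)
  X_embIdx : ∀ z ≠ nextIdx n j, N.X z = E.X (embIdx j z)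
  Y_embIdx : ∀ z ≠ nextIdx n j, N.Y z = E.Y (embIdx j z)

def extendAt {n r c : ℕ} (j : ℕ) (G : ZMod n → Matrix (Fin r) (Fin c) Rser)
    (P : Matrix (Fin r) (Fin c) Rser) (i : ZMod (n + 1)) : Matrix (Fin r) (Fin c) Rser :=
  if i = insIdx n j then P else G (projIdx j i)

section Contraction

variable {k k' n j a b : ℕ} [NeZero n] (hj : 1 ≤ j) (hj' : j ≤ n)
include hj hj'

theorem isContraction_incData {s : ℕ} {M : CMMod k n s} {M' : CMMod k' (n + 1) s}
    (hX : M'.X = incData j M.X (tser ^ a • 1)) (hY : M'.Y = incData j M.Y (tser ^ b • 1)) :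
    IsContraction j a b M M' 1 1 where
  mul_inv := mul_one _
  inv_mul := mul_one _
  X_eq := by rw [hX, incData_insIdx hj']
  Y_eq := by rw [hY, incData_insIdx hj']
  X_nextIdx := by rw [mul_one, hX, ← embIdx_nextIdx hj hj', incData_embIdx]
  Y_nextIdx := by rw [one_mul, hY, ← embIdx_nextIdx hj hj', incData_embIdx]
  X_embIdx z _ := by rw [hX, incData_embIdx]
  Y_embIdx z _ := by rw [hY, incData_embIdx]

theorem smul_cycProd_nextIdx {s : ℕ} {E : CMMod k' (n + 1) s} {C D : Matrix (Fin s) (Fin s) Rser}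
    (hE : IsCorner (insIdx n j) a b E C D) {X : ZMod n → Matrix (Fin s) (Fin s) Rser}
    (h₀ : X (nextIdx n j) = E.X (insIdx n j + 1) * C)
    (h : ∀ z ≠ nextIdx n j, X z = E.X (embIdx j z)) :
    tser ^ a • cycProd X (nextIdx n j) = cycProd E.X (insIdx n j + 1) := by
  obtain ⟨m, rfl⟩ := Nat.exists_eq_add_one_of_ne_zero (NeZero.ne n)
  have hpath : pathProd X (nextIdx (m + 1) j - 1) m = pathProd E.X (insIdx (m + 1) j - 1) m := by
    apply pathProd_congr
    intro r hr
    rw [h _ (sub_one_sub_natCast_ne _ (by omega)), embIdx_nextIdx_sub hj hj' (by omega)]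
  rw [cycProd_eq_pathProd, cycProd_eq_pathProd, pathProd_succ, pathProd_succ, pathProd_succ,
    add_sub_cancel_right, h₀, hpath, hE.X_eq]
  simp only [Matrix.smul_mul, Matrix.mul_smul, mul_assoc]

theorem exists_isContraction {s : ℕ} {E : CMMod k' (n + 1) s} {C D : Matrix (Fin s) (Fin s) Rser}
    (hE : IsCorner (insIdx n j) a b E C D) (hexp : n + 1 - k' = n - k + a) :
    ∃ N : CMMod k n s, IsContraction j a b N E C D := by
  let X z := if z = nextIdx n j then E.X (insIdx n j + 1) * C else E.X (embIdx j z)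
  let Y z := if z = nextIdx n j then D * E.Y (insIdx n j + 1) else E.Y (embIdx j z)
  have hXY : ∀ z, X z * Y z = tser • 1 := fun z => by
    by_cases hz : z = nextIdx n j
    · simp only [X, Y, if_pos hz, mul_assoc, ← mul_assoc C D, hE.mul_inv, one_mul, E.hXY]
    · simp only [X, Y, if_neg hz, E.hXY]
  have hYX : ∀ z, Y z * X z = tser • 1 := fun z => by
    by_cases hz : z = nextIdx n j
    · simp only [X, Y, if_pos hz, mul_assoc, ← mul_assoc (E.Y _), E.hYX, Matrix.smul_mul,
        Matrix.mul_smul, one_mul, hE.inv_mul]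
    · simp only [X, Y, if_neg hz, E.hYX]
  have hcyc₀ : cycProd X (nextIdx n j) = tser ^ (n - k) • 1 := by
    rw [← tser_pow_smul_inj a, smul_cycProd_nextIdx hj hj' hE (if_pos rfl) fun z hz => if_neg hz,
      E.hcyc, hexp, smul_smul, ← pow_add, add_comm]
  exact ⟨⟨X, Y, hXY, hYX, cycProd_eq_smul_one_of_eq hXY hcyc₀⟩,
    { hE with
      X_nextIdx := if_pos rfl
      Y_nextIdx := if_pos rfl
      X_embIdx := fun z hz => if_neg hz
      Y_embIdx := fun z hz => if_neg hz }⟩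

end Contraction

section Functoriality

variable {k k' n j a b sA sB : ℕ} [NeZero n] (hj : 1 ≤ j) (hj' : j ≤ n)
  {A₀ : CMMod k n sA} {A : CMMod k' (n + 1) sA} {CA DA : Matrix (Fin sA) (Fin sA) Rser}
  {B₀ : CMMod k n sB} {B : CMMod k' (n + 1) sB} {CB DB : Matrix (Fin sB) (Fin sB) Rser}
  {sE : ℕ} {E₀ : CMMod k n sE} {E : CMMod k' (n + 1) sE} {CE DE : Matrix (Fin sE) (Fin sE) Rser}
include hj hj'

omit [NeZero n] hj hj' in
theorem extendAt_insIdx {r c : ℕ} (G : ZMod n → Matrix (Fin r) (Fin c) Rser)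
    (P : Matrix (Fin r) (Fin c) Rser) : extendAt j G P (insIdx n j) = P :=
  if_pos rfl

theorem extendAt_embIdx {r c : ℕ} (G : ZMod n → Matrix (Fin r) (Fin c) Rser)
    (P : Matrix (Fin r) (Fin c) Rser) (z : ZMod n) : extendAt j G P (embIdx j z) = G z := by
  rw [extendAt, if_neg (embIdx_ne_insIdx hj' z), projIdx_embIdx hj hj']

theorem extendAt_insIdx_add_one {r c : ℕ} (G : ZMod n → Matrix (Fin r) (Fin c) Rser)
    (P : Matrix (Fin r) (Fin c) Rser) : extendAt j G P (insIdx n j + 1) = G (nextIdx n j) := by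
  rw [← embIdx_nextIdx hj hj', extendAt_embIdx hj hj']

theorem extendAt_insIdx_sub_one {r c : ℕ} (G : ZMod n → Matrix (Fin r) (Fin c) Rser)
    (P : Matrix (Fin r) (Fin c) Rser) : extendAt j G P (insIdx n j - 1) = G (nextIdx n j - 1) := by
  rw [← embIdx_nextIdx_sub_one hj hj', extendAt_embIdx hj hj']

def CMHom.restrict (hA : IsContraction j a b A₀ A CA DA) (hB : IsContraction j a b B₀ B CB DB)
    (f : CMHom A B) : CMHom A₀ B₀ where
  F z := f.F (embIdx j z)
  hX z := by
    by_cases hz : z = nextIdx n j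
    · subst hz
      rw [hA.X_nextIdx, hB.X_nextIdx, embIdx_nextIdx hj hj', embIdx_nextIdx_sub_one hj hj',
        ← Matrix.mul_assoc, f.hX, add_sub_cancel_right, Matrix.mul_assoc,
        f.corner_X hA.toIsCorner hB.toIsCorner, Matrix.mul_assoc]
    · rw [hA.X_embIdx z hz, hB.X_embIdx z hz, embIdx_sub_one hj hj' hz]
      exact f.hX _
  hY z := by
    by_cases hz : z = nextIdx n j
    · subst hz
      rw [hA.Y_nextIdx, hB.Y_nextIdx, embIdx_nextIdx hj hj', embIdx_nextIdx_sub_one hj hj',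
        ← Matrix.mul_assoc, f.corner_Y hA.toIsCorner hB.toIsCorner, Matrix.mul_assoc,
        f.hY_add_one, Matrix.mul_assoc]
    · rw [hA.Y_embIdx z hz, hB.Y_embIdx z hz, embIdx_sub_one hj hj' hz]
      exact f.hY _

def CMses.restrict (hA : IsContraction j a b A₀ A CA DA) (hE : IsContraction j a b E₀ E CE DE)
    (hB : IsContraction j a b B₀ B CB DB) (S : CMses A E B) : CMses A₀ E₀ B₀ where
  emb := S.emb.restrict hj hj' hA hE
  quo := S.quo.restrict hj hj' hE hB
  inj _ := S.inj _
  exactness _ := S.exactness _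
  surj _ := S.surj _

def CMHom.lift (hA : IsContraction j a b A₀ A CA DA) (hB : IsContraction j a b B₀ B CB DB)
    (g : CMHom A₀ B₀) : CMHom A B where
  F := extendAt j g.F (CB * g.F (nextIdx n j - 1) * DA)
  hX i := by
    rcases eq_or_ne i (insIdx n j) with rfl | hi
    · rw [extendAt_insIdx, extendAt_insIdx_sub_one hj hj', hA.X_eq, hB.X_eq]
      simp only [Matrix.mul_smul, Matrix.smul_mul, Matrix.mul_assoc, hA.inv_mul, Matrix.mul_one]
    obtain ⟨z, rfl⟩ : ∃ z, embIdx j z = i := ⟨_, embIdx_projIdx hj hj' hi⟩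
    rcases eq_or_ne z (nextIdx n j) with rfl | hz
    · have h := g.hX (nextIdx n j)
      rw [hA.X_nextIdx, hB.X_nextIdx] at h
      rw [embIdx_nextIdx hj hj', add_sub_cancel_right, extendAt_insIdx,
        extendAt_insIdx_add_one hj hj']
      calc _ = g.F (nextIdx n j) * (A.X (insIdx n j + 1) * CA) * DA := by
            rw [Matrix.mul_assoc, Matrix.mul_assoc, hA.mul_inv, Matrix.mul_one]
        _ = _ := by rw [h]; simp only [Matrix.mul_assoc]
    · rw [extendAt_embIdx hj hj', ← embIdx_sub_one hj hj' hz, extendAt_embIdx hj hj',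
        ← hA.X_embIdx z hz, ← hB.X_embIdx z hz]
      exact g.hX z
  hY i := by
    rcases eq_or_ne i (insIdx n j) with rfl | hi
    · rw [extendAt_insIdx, extendAt_insIdx_sub_one hj hj', hA.Y_eq, hB.Y_eq]
      simp only [Matrix.mul_smul, Matrix.smul_mul, ← Matrix.mul_assoc, hB.inv_mul, Matrix.one_mul]
    obtain ⟨z, rfl⟩ : ∃ z, embIdx j z = i := ⟨_, embIdx_projIdx hj hj' hi⟩
    rcases eq_or_ne z (nextIdx n j) with rfl | hz
    · have h := g.hY (nextIdx n j)
      rw [hA.Y_nextIdx, hB.Y_nextIdx] at h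
      rw [embIdx_nextIdx hj hj', add_sub_cancel_right, extendAt_insIdx,
        extendAt_insIdx_add_one hj hj']
      calc _ = CB * (g.F (nextIdx n j - 1) * (DA * A.Y (insIdx n j + 1))) := by
            simp only [Matrix.mul_assoc]
        _ = _ := by rw [h, ← Matrix.mul_assoc, ← Matrix.mul_assoc, hB.mul_inv, Matrix.one_mul]
    · rw [extendAt_embIdx hj hj', ← embIdx_sub_one hj hj' hz, extendAt_embIdx hj hj',
        ← hA.Y_embIdx z hz, ← hB.Y_embIdx z hz]
      exact g.hY z

theorem CMHom.lift_mul_eq_one (hA : IsContraction j a b A₀ A CA DA)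
    (hB : IsContraction j a b B₀ B CB DB) {g : CMHom A₀ B₀} {f : CMHom B A}
    (h : ∀ z, g.F z * f.F (embIdx j z) = 1) (i : ZMod (n + 1)) :
    (g.lift hj hj' hA hB).F i * f.F i = 1 := by
  rcases eq_or_ne i (insIdx n j) with rfl | hi
  · show extendAt j g.F _ _ * f.F _ = 1
    rw [extendAt_insIdx, Matrix.mul_assoc, Matrix.mul_assoc,
      ← f.corner_Y hB.toIsCorner hA.toIsCorner, ← Matrix.mul_assoc (g.F _),
      ← embIdx_nextIdx_sub_one hj hj', h, Matrix.one_mul, hB.mul_inv]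
  obtain ⟨z, rfl⟩ : ∃ z, embIdx j z = i := ⟨_, embIdx_projIdx hj hj' hi⟩
  show extendAt j g.F _ _ * f.F _ = 1
  rw [extendAt_embIdx hj hj', h]

theorem rigid_of_isContraction {s : ℕ} {M : CMMod k n s} {M' : CMMod k' (n + 1) s}
    (hM : IsContraction j a b M M' 1 1) (hexp : n + 1 - k' = n - k + a) (hrig : Rigid M)
    (hcorner : ∀ (sE : ℕ) (E : CMMod k' (n + 1) sE), CMses M' E M' →
      ∃ C D, IsCorner (insIdx n j) a b E C D) :
    Rigid M' := by
  intro sE E S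
  obtain ⟨C, D, hE⟩ := hcorner sE E S
  obtain ⟨E₀, hE₀⟩ := exists_isContraction hj hj' hE hexp
  obtain ⟨ρ, hρ⟩ := hrig sE E₀ (S.restrict hj hj' hM hE₀ hM)
  exact ⟨ρ.lift hj hj' hE₀ hM, CMHom.lift_mul_eq_one hj hj' hE₀ hM hρ⟩

end Functoriality

theorem inc_rigid_general (k n : ℕ) (hkn : k < n) (s : ℕ) (M : CMMod k n s)
    (hrig : Rigid M)
    (j : ℕ) (hj : 1 ≤ j) (hj' : j ≤ n)
    (M' : CMMod (k + 1) (n + 1) s) (hM' : IsInc j M M')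
    (M'' : CMMod k (n + 1) s) (hM'' : IsCoInc j M M'') :
    Rigid M' ∧ Rigid M'' := by
  have : NeZero n := ⟨by omega⟩
  obtain ⟨hX', hY'⟩ := hM'
  obtain ⟨hX'', hY''⟩ := hM''
  have hinc : IsContraction j 0 1 M M' 1 1 :=
    isContraction_incData hj hj' (by rw [hX', pow_zero, one_smul]) (by rw [hY', pow_one])
  have hcoinc : IsContraction j 1 0 M M'' 1 1 :=
    isContraction_incData hj hj' (by rw [hX'', pow_one]) (by rw [hY'', pow_zero, one_smul])
  refine ⟨rigid_of_isContraction hj hj' hinc (by omega) hrig fun _ _ S => ?_,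
    rigid_of_isContraction hj hj' hcoinc (by omega) hrig fun _ _ S => ?_⟩
  · have hX₁ : M'.X (insIdx n j) = 1 := by rw [hX', incData_insIdx hj']
    exact ⟨_, _, isCorner_of_isUnit_X (S.isUnit_X hX₁ hX₁)⟩
  · have hY₁ : M''.Y (insIdx n j) = 1 := by rw [hY'', incData_insIdx hj']
    exact ⟨_, _, isCorner_of_isUnit_Y (S.isUnit_Y hY₁ hY₁)⟩

/-- 1-increases and 1-co-increases of rigid indecomposable modules are rigid. -/
theorem inc_rigid (k n : ℕ) (hk : 1 ≤ k) (hkn : k < n) (s : ℕ) (M : CMMod k n s)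
    (hrig : Rigid M) (hind : Indecomposable M)
    (j : ℕ) (hj : 1 ≤ j) (hj' : j ≤ n)
    (M' : CMMod (k + 1) (n + 1) s) (hM' : IsInc j M M')
    (M'' : CMMod k (n + 1) s) (hM'' : IsCoInc j M M'') :
    Rigid M' ∧ Rigid M'' :=
  inc_rigid_general k n hkn s M hrig j hj hj' M' hM' M'' hM''

end GCC
end
end
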